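/- Let (Ω, F, P) be a probability space with a filtration (F_L)_{L∈ℕ}, let ε > 0, and let V_1, ..., V_n be random variables measurable with respect to F_∞ = ∨_L F_L, with ε ≤ V_i ≤ 1 almost surely for each i. Let r_1, ..., r_n > 0 be constants. For m ∈ ℕ set L(m) = ⌊√m⌋; define m_i(m) = max{ L(m), ⌊ m·√(E[V_i|F_{L(m)}]) / ∑_{j=1}^n √(E[V_j|F_{L(m)}]) ⌋ } for i = 1, ..., n−1, and m_n(m) = m − ∑_{i=1}^{n−1} m_i(m); and set U_i = E[V_i | F_m]. Then for all i ≠ j, lim_{m→∞} E[ ((m_i(m)+r_i)√U_j − (m_j(m)+r_j)√U_i)² / ((m_i(m)+r_i)(m_j(m)+r_j)) ] = 0. -/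

import Mathlib

open MeasureTheory ProbabilityTheory Filter Finset

/-!
By Lévy's upward theorem `E[V_k | F_L] → V_k` almost surely, so the first-stage shares
`√E[V_k | F_⌊√m⌋] / ∑_l √E[V_l | F_⌊√m⌋]` converge and `m_k(m) / m → √V_k / ∑_l √V_l` for every
arm (for the last one because the allocations add up to `m`). The cross term is unchanged when
both `m_i + r_i` and `m_j + r_j` are divided by `m`, and in the limit
`(m_i / m) √V_j = (m_j / m) √V_i`, so it tends to `0` almost surely. As `V_k ≥ ε`, every share
is at least `√ε / (n + 1)`, so every `m_k(m)` is of order `m` and the cross terms are bounded by a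
constant; bounded convergence concludes.
-/

lemma tendsto_sqrt_natCast_div_natCast :
    Tendsto (fun m : ℕ => √(m : ℝ) / m) atTop (nhds 0) := by
  simp_rw [Real.sqrt_div_self', one_div]
  exact tendsto_inv_atTop_zero.comp (Real.tendsto_sqrt_atTop.comp tendsto_natCast_atTop_atTop)

lemma tendsto_natSqrt_div_natCast :
    Tendsto (fun m : ℕ => (Nat.sqrt m : ℝ) / m) atTop (nhds 0) :=
  squeeze_zero (fun _ => by positivity)
    (fun m => div_le_div_of_nonneg_right Real.nat_sqrt_le_real_sqrt m.cast_nonneg)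
    tendsto_sqrt_natCast_div_natCast

lemma eventually_mul_sqrt_add_one_le_mul {c : ℝ} (hc : 0 < c) (k : ℝ) :
    ∀ᶠ m : ℕ in atTop, k * √(m : ℝ) + 1 ≤ m * c := by
  have h : Tendsto (fun m : ℕ => k * (√(m : ℝ) / m) + 1 / m) atTop (nhds 0) := by
    simpa using (tendsto_sqrt_natCast_div_natCast.const_mul k).add
      tendsto_one_div_atTop_nhds_zero_nat
  filter_upwards [h.eventually (gt_mem_nhds hc), eventually_gt_atTop 0] with m hm hm0
  rw [mul_div_assoc', ← add_div, div_lt_iff₀ (by positivity)] at hm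
  exact hm.le.trans_eq (mul_comm _ _)

lemma tendsto_floor_mul_div_natCast {g : ℕ → ℝ} {G : ℝ} (hg : Tendsto g atTop (nhds G)) :
    Tendsto (fun m : ℕ => (⌊(m : ℝ) * g m⌋ : ℝ) / m) atTop (nhds G) := by
  have hlow : Tendsto (fun m : ℕ => g m - 1 / m) atTop (nhds G) := by
    simpa using hg.sub tendsto_one_div_atTop_nhds_zero_nat
  refine tendsto_of_tendsto_of_tendsto_of_le_of_le' hlow hg ?_ ?_ <;>
    filter_upwards [eventually_gt_atTop 0] with m hm <;>
    have hm' : (0 : ℝ) < m := by exact_mod_cast hm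
  · rw [sub_le_iff_le_add, ← add_div, le_div_iff₀ hm', mul_comm]
    exact (Int.lt_floor_add_one _).le
  · rw [div_le_iff₀ hm', mul_comm]
    exact Int.floor_le _

lemma tendsto_natSqrt_atTop : Tendsto Nat.sqrt atTop atTop :=
  tendsto_atTop_atTop.2 fun b => ⟨b * b, fun _ hm => Nat.le_sqrt.2 hm⟩

lemma tendsto_add_const_div_natCast {a : ℕ → ℝ} {A : ℝ}
    (ha : Tendsto (fun m => a m / m) atTop (nhds A)) (r : ℝ) : Tendsto (fun m => (a m + r) / m) atTop (nhds A) := by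
  simpa [add_div] using ha.add (tendsto_const_div_atTop_nhds_zero_nat r)

section Share

variable {ι : Type*} [Fintype ι]

noncomputable def share (w : ι → ℝ) (i : ι) : ℝ := w i / ∑ j, w j

variable {w : ι → ℝ}

lemma share_nonneg (hw : ∀ j, 0 ≤ w j) (i : ι) : 0 ≤ share w i :=
  div_nonneg (hw i) (sum_nonneg fun j _ => hw j)

lemma share_le_one (hw : ∀ j, 0 ≤ w j) (i : ι) : share w i ≤ 1 :=
  div_le_one_of_le₀ (single_le_sum (fun j _ => hw j) (mem_univ i)) (sum_nonneg fun j _ => hw j)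

lemma share_pos (hw : ∀ j, 0 < w j) (i : ι) : 0 < share w i :=
  div_pos (hw i) (sum_pos (fun j _ => hw j) ⟨i, mem_univ i⟩)

lemma sum_share [Nonempty ι] (hw : ∀ j, 0 < w j) : ∑ i, share w i = 1 := by
  simp only [share, ← Finset.sum_div, div_self (sum_pos (fun j _ => hw j) univ_nonempty).ne']

lemma div_card_le_share {a : ℝ} (ha : 0 < a) (hw : ∀ j, w j ∈ Set.Icc a 1) (i : ι) :
    a / Fintype.card ι ≤ share w i := by
  have hsum_le : ∑ j, w j ≤ Fintype.card ι := by
    simpa using Finset.sum_le_card_nsmul univ w 1 fun j _ => (hw j).2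
  exact div_le_div₀ (ha.le.trans (hw i).1) (hw i).1
    (sum_pos (fun j _ => ha.trans_le (hw j).1) ⟨i, mem_univ i⟩) hsum_le

lemma tendsto_share {α : Type*} {l : Filter α} {w : α → ι → ℝ} {w₀ : ι → ℝ}
    (hw : ∀ j, Tendsto (fun t => w t j) l (nhds (w₀ j))) (h₀ : ∑ j, w₀ j ≠ 0) (i : ι) :
    Tendsto (fun t => share (w t) i) l (nhds (share w₀ i)) :=
  (hw i).div (tendsto_finsetSum _ fun j _ => hw j) h₀

end Share

structure IsTwoStageAllocation {n : ℕ} (w : ℕ → Fin (n + 1) → ℝ)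
    (a : ℕ → Fin (n + 1) → ℤ) : Prop where
  castSucc : ∀ m (i : Fin n),
    a m i.castSucc = max (Nat.sqrt m : ℤ) ⌊(m : ℝ) * share (w (Nat.sqrt m)) i.castSucc⌋
  last : ∀ m, a m (Fin.last n) = m - ∑ i : Fin n, a m i.castSucc

namespace IsTwoStageAllocation

variable {n : ℕ} {w : ℕ → Fin (n + 1) → ℝ} {a : ℕ → Fin (n + 1) → ℤ}

lemma cast_castSucc (h : IsTwoStageAllocation w a) (m : ℕ) (i : Fin n) :
    (a m i.castSucc : ℝ) =
      max (Nat.sqrt m : ℝ) ⌊(m : ℝ) * share (w (Nat.sqrt m)) i.castSucc⌋ := by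
  rw [h.castSucc]
  push_cast
  rfl

lemma cast_last (h : IsTwoStageAllocation w a) (m : ℕ) :
    (a m (Fin.last n) : ℝ) = m - ∑ i : Fin n, (a m i.castSucc : ℝ) := by
  rw [h.last]
  push_cast
  rfl

lemma cast_castSucc_le (h : IsTwoStageAllocation w a) {m : ℕ} (hw : ∀ k, 0 ≤ w (Nat.sqrt m) k)
    (i : Fin n) :
    (a m i.castSucc : ℝ) ≤ √(m : ℝ) + m * share (w (Nat.sqrt m)) i.castSucc := by
  have := share_nonneg hw i.castSucc
  rw [h.cast_castSucc]
  exact max_le (Real.nat_sqrt_le_real_sqrt.trans (le_add_of_nonneg_right (by positivity)))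
    ((Int.floor_le _).trans (le_add_of_nonneg_left (Real.sqrt_nonneg _)))

lemma cast_le (h : IsTwoStageAllocation w a) (hw : ∀ L k, 0 ≤ w L k) (m : ℕ)
    (i : Fin (n + 1)) : (a m i : ℝ) ≤ m := by
  induction i using Fin.lastCases with
  | last =>
    rw [h.cast_last, sub_le_self_iff]
    exact sum_nonneg fun i _ => by rw [h.cast_castSucc]; exact le_max_of_le_left (by positivity)
  | cast i =>
    rw [h.cast_castSucc]
    refine max_le (Nat.cast_le.2 (Nat.sqrt_le_self m)) ((Int.floor_le _).trans ?_)
    exact mul_le_of_le_one_right m.cast_nonneg (share_le_one (hw _) _)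

lemma mul_sub_le (h : IsTwoStageAllocation w a) {b : ℝ} (hb : 0 < b)
    (hw : ∀ L k, w L k ∈ Set.Icc b 1) (m : ℕ) (i : Fin (n + 1)) :
    m * (b / (n + 1)) - n * √(m : ℝ) - 1 ≤ a m i := by
  set s := share (w (Nat.sqrt m))
  have hmc : ∀ k, (m : ℝ) * (b / (n + 1)) ≤ m * s k := fun k =>
    mul_le_mul_of_nonneg_left (by simpa using div_card_le_share hb (hw _) k) m.cast_nonneg
  induction i using Fin.lastCases with
  | last =>
    have hsum : ∑ i : Fin n, (a m i.castSucc : ℝ) ≤ n * √(m : ℝ) + m * (1 - s (Fin.last n)) :=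
      calc ∑ i : Fin n, (a m i.castSucc : ℝ) ≤ ∑ i : Fin n, (√(m : ℝ) + m * s i.castSucc) :=
            sum_le_sum fun i _ => h.cast_castSucc_le (fun k => hb.le.trans (hw _ k).1) i
        _ = n * √(m : ℝ) + m * (1 - s (Fin.last n)) := by
          rw [← sum_share (w := w (Nat.sqrt m)) fun k => hb.trans_le (hw _ k).1,
            Fin.sum_univ_castSucc, sum_add_distrib, ← mul_sum]
          simp [s]
    rw [h.cast_last]
    linarith [hmc (Fin.last n)]
  | cast i =>
    rw [h.cast_castSucc]
    have := Int.sub_one_lt_floor ((m : ℝ) * s i.castSucc)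
    have : (0 : ℝ) ≤ n * √(m : ℝ) := by positivity
    exact le_max_of_le_right (by linarith [hmc i.castSucc])

lemma tendsto_div (h : IsTwoStageAllocation w a) {w₀ : Fin (n + 1) → ℝ}
    (hw₀ : ∀ k, 0 < w₀ k) (hlim : ∀ k, Tendsto (fun L => w L k) atTop (nhds (w₀ k)))
    (i : Fin (n + 1)) : Tendsto (fun m => (a m i : ℝ) / m) atTop (nhds (share w₀ i)) := by
  have hs : ∀ k, Tendsto (fun m => share (w (Nat.sqrt m)) k) atTop (nhds (share w₀ k)) :=
    fun k => (tendsto_share hlim (sum_pos (fun k _ => hw₀ k) univ_nonempty).ne' k).comp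
      tendsto_natSqrt_atTop
  have hcast : ∀ i : Fin n, Tendsto (fun m => (a m i.castSucc : ℝ) / m) atTop
      (nhds (share w₀ i.castSucc)) := by
    intro i
    have hmax := tendsto_natSqrt_div_natCast.max (tendsto_floor_mul_div_natCast (hs i.castSucc))
    rw [max_eq_right (share_nonneg (fun k => (hw₀ k).le) _)] at hmax
    refine hmax.congr fun m => ?_
    rw [h.cast_castSucc, max_div_div_right m.cast_nonneg]
  induction i using Fin.lastCases with
  | last =>
    have hlast : 1 - ∑ i : Fin n, share w₀ i.castSucc = share w₀ (Fin.last n) := by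
      rw [← sum_share hw₀, Fin.sum_univ_castSucc]
      ring
    have hlim : Tendsto (fun m => 1 - ∑ i : Fin n, (a m i.castSucc : ℝ) / m) atTop
        (nhds (1 - ∑ i : Fin n, share w₀ i.castSucc)) :=
      tendsto_const_nhds.sub (tendsto_finsetSum _ fun i _ => hcast i)
    rw [hlast] at hlim
    refine hlim.congr' ?_
    filter_upwards [eventually_ne_atTop 0] with m hm
    rw [h.cast_last, sub_div, div_self (Nat.cast_ne_zero.2 hm), sum_div]
  | cast i => exact hcast i

lemma add_mem_Icc (h : IsTwoStageAllocation w a) {b : ℝ} (hb : 0 < b)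
    (hw : ∀ L k, w L k ∈ Set.Icc b 1) {m : ℕ} (hm₁ : 1 ≤ m)
    (hm : n * √(m : ℝ) + 1 ≤ m * (b / (n + 1) / 2)) {r : ℝ} (hr : 0 ≤ r) (i : Fin (n + 1)) :
    (a m i : ℝ) + r ∈ Set.Icc (b / (n + 1) / 2 * m) ((1 + r) * m) := by
  have hm₁' : (1 : ℝ) ≤ m := by exact_mod_cast hm₁
  constructor
  · nlinarith [h.mul_sub_le hb hw m i]
  · nlinarith [h.cast_le (fun L k => hb.le.trans (hw L k).1) m i]

end IsTwoStageAllocation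

lemma IsTwoStageAllocation.measurable {n : ℕ} {Ω : Type*} [MeasurableSpace Ω]
    {w : Ω → ℕ → Fin (n + 1) → ℝ} {a : ℕ → Fin (n + 1) → Ω → ℤ}
    (h : ∀ ω, IsTwoStageAllocation (w ω) (fun m i => a m i ω))
    (hw : ∀ L k, Measurable fun ω => w ω L k) (m : ℕ) (i : Fin (n + 1)) :
    Measurable (a m i) := by
  have hcast : ∀ i : Fin n, Measurable (a m i.castSucc) := by
    intro i
    rw [show a m i.castSucc = _ from funext fun ω => (h ω).castSucc m i]
    unfold share
    fun_prop
  induction i using Fin.lastCases with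
  | last =>
    rw [show a m (Fin.last n) = _ from funext fun ω => (h ω).last m]
    exact measurable_const.sub (Finset.measurable_sum _ fun i _ => hcast i)
  | cast i => exact hcast i

lemma ae_condExp_mem_Icc {Ω : Type*} {m mΩ : MeasurableSpace Ω} {μ : Measure Ω}
    [IsFiniteMeasure μ] (hm : m ≤ mΩ) {f : Ω → ℝ} (hf : Integrable f μ) {a b : ℝ}
    (hab : ∀ᵐ ω ∂μ, f ω ∈ Set.Icc a b) : ∀ᵐ ω ∂μ, μ[f|m] ω ∈ Set.Icc a b := by
  have hlo := condExp_mono (m := m) (integrable_const a) hf (hab.mono fun ω h => h.1)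
  have hhi := condExp_mono (m := m) hf (integrable_const b) (hab.mono fun ω h => h.2)
  rw [condExp_const hm] at hlo hhi
  filter_upwards [hlo, hhi] with ω h₁ h₂
  exact ⟨h₁, h₂⟩

lemma ae_condExp_mem_Icc_and_tendsto {Ω : Type*} {mΩ : MeasurableSpace Ω} {μ : Measure Ω}
    [IsFiniteMeasure μ] {ℱ : Filtration ℕ mΩ} {f : Ω → ℝ} (hf : StronglyMeasurable[⨆ L, ℱ L] f)
    {a b : ℝ} (hab : ∀ᵐ ω ∂μ, f ω ∈ Set.Icc a b) :
    ∀ᵐ ω ∂μ, (∀ L, μ[f|ℱ L] ω ∈ Set.Icc a b) ∧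
      Tendsto (fun L => μ[f|ℱ L] ω) atTop (nhds (f ω)) := by
  have hint : Integrable f μ := .of_bound (hf.mono (iSup_le ℱ.le)).aestronglyMeasurable
    (max |a| |b|) (hab.mono fun ω h => abs_le_max_abs_abs h.1 h.2)
  exact (ae_all_iff.2 fun L => ae_condExp_mem_Icc (ℱ.le L) hint hab).and
    (hint.tendsto_ae_condExp hf)

noncomputable def crossTerm (x y u v : ℝ) : ℝ := (x * √v - y * √u) ^ 2 / (x * y)

section CrossTerm

variable {x y u v : ℝ}

lemma crossTerm_nonneg (hx : 0 ≤ x) (hy : 0 ≤ y) : 0 ≤ crossTerm x y u v :=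
  div_nonneg (sq_nonneg _) (mul_nonneg hx hy)

lemma crossTerm_le (hx : 0 < x) (hy : 0 < y) (hu : u ≤ 1) (hv : v ≤ 1) :
    crossTerm x y u v ≤ x / y + y / x := by
  have hnum : (x * √v - y * √u) ^ 2 ≤ x ^ 2 + y ^ 2 :=
    calc (x * √v - y * √u) ^ 2 ≤ (x * √v) ^ 2 + (y * √u) ^ 2 := by
          nlinarith [mul_nonneg (mul_nonneg hx.le (Real.sqrt_nonneg v))
            (mul_nonneg hy.le (Real.sqrt_nonneg u))]
      _ ≤ x ^ 2 + y ^ 2 := by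
          gcongr
          · exact mul_le_of_le_one_right hx.le (Real.sqrt_le_one.2 hv)
          · exact mul_le_of_le_one_right hy.le (Real.sqrt_le_one.2 hu)
  calc crossTerm x y u v ≤ (x ^ 2 + y ^ 2) / (x * y) := by
        unfold crossTerm
        gcongr
    _ = x / y + y / x := by field_simp

lemma crossTerm_div_div (t : ℝ) (ht : t ≠ 0) :
    crossTerm (x / t) (y / t) u v = crossTerm x y u v := by
  unfold crossTerm
  field_simp

lemma crossTerm_eq_zero (h : x * √v = y * √u) : crossTerm x y u v = 0 := by
  simp [crossTerm, h]

lemma crossTerm_le_of_mem_Icc {δ K K' t : ℝ} (hδ : 0 < δ) (ht : 0 < t)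
    (hx : x ∈ Set.Icc (δ * t) (K * t)) (hy : y ∈ Set.Icc (δ * t) (K' * t)) (hu : u ≤ 1)
    (hv : v ≤ 1) : crossTerm x y u v ≤ (K + K') / δ := by
  have hx₀ : 0 < x := (mul_pos hδ ht).trans_le hx.1
  have hy₀ : 0 < y := (mul_pos hδ ht).trans_le hy.1
  have hxy : x / y ≤ K / δ := by
    rw [div_le_div_iff₀ hy₀ hδ]; nlinarith [hx.2, hy.1]
  have hyx : y / x ≤ K' / δ := by
    rw [div_le_div_iff₀ hx₀ hδ]; nlinarith [hy.2, hx.1]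
  calc crossTerm x y u v ≤ x / y + y / x := crossTerm_le hx₀ hy₀ hu hv
    _ ≤ (K + K') / δ := by rw [add_div]; exact add_le_add hxy hyx

end CrossTerm

lemma tendsto_crossTerm_zero {a b u v : ℕ → ℝ} {A B U W : ℝ} (hA : A ≠ 0) (hB : B ≠ 0)
    (ha : Tendsto (fun m => a m / m) atTop (nhds A))
    (hb : Tendsto (fun m => b m / m) atTop (nhds B))
    (hu : Tendsto u atTop (nhds U)) (hv : Tendsto v atTop (nhds W)) (hAB : A * √W = B * √U) :
    Tendsto (fun m => crossTerm (a m) (b m) (u m) (v m)) atTop (nhds 0) := by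
  have h : Tendsto (fun m => crossTerm (a m / m) (b m / m) (u m) (v m)) atTop
      (nhds (crossTerm A B U W)) :=
    (((ha.mul hv.sqrt).sub (hb.mul hu.sqrt)).pow 2).div (ha.mul hb) (mul_ne_zero hA hB)
  rw [crossTerm_eq_zero hAB] at h
  refine h.congr' ?_
  filter_upwards [eventually_ne_atTop 0] with m hm
  exact crossTerm_div_div _ (Nat.cast_ne_zero.2 hm)

lemma tendsto_integral_crossTerm_zero {Ω : Type*} [MeasurableSpace Ω] {μ : Measure Ω}
    [IsFiniteMeasure μ] {x y u v : ℕ → Ω → ℝ} {δ K K' : ℝ} (hδ : 0 < δ)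
    (hmeas : ∀ m, AEStronglyMeasurable (fun ω => crossTerm (x m ω) (y m ω) (u m ω) (v m ω)) μ)
    (hbound : ∀ᶠ m : ℕ in atTop, ∀ᵐ ω ∂μ, x m ω ∈ Set.Icc (δ * m) (K * m) ∧
      y m ω ∈ Set.Icc (δ * m) (K' * m) ∧ u m ω ≤ 1 ∧ v m ω ≤ 1)
    (hlim : ∀ᵐ ω ∂μ, Tendsto (fun m => crossTerm (x m ω) (y m ω) (u m ω) (v m ω)) atTop (nhds 0)) :
    Tendsto (fun m => ∫ ω, crossTerm (x m ω) (y m ω) (u m ω) (v m ω) ∂μ) atTop (nhds 0) := by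
  have h := tendsto_integral_filter_of_dominated_convergence (fun _ => (K + K') / δ)
    (Eventually.of_forall hmeas) ?_ (integrable_const _) hlim
  · simpa using h
  filter_upwards [hbound, eventually_gt_atTop 0] with m hm hm₀
  filter_upwards [hm] with ω ⟨hx, hy, hu, hv⟩
  have ht : (0 : ℝ) < m := by exact_mod_cast hm₀
  rw [Real.norm_of_nonneg (crossTerm_nonneg ((mul_pos hδ ht).le.trans hx.1)
    ((mul_pos hδ ht).le.trans hy.1))]
  exact crossTerm_le_of_mem_Icc hδ ht hx hy hu hv

/-- Identity (p2): the cross terms of the Lagrange-identity expansion of the Bayes risk,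
evaluated along the two-stage sequential allocation, vanish in expectation as `m → ∞`. -/
theorem two_stage_cross_terms_vanish {Ω : Type*} {mΩ : MeasurableSpace Ω} (P : Measure Ω)
    [IsProbabilityMeasure P] (F : ℕ → MeasurableSpace Ω)
    (hFmono : Monotone F) (hFle : ∀ L, F L ≤ mΩ)
    (ε : ℝ) (hε : 0 < ε)
    (n : ℕ) (V : Fin (n + 1) → Ω → ℝ)
    (hVmeas : ∀ i, Measurable[⨆ L, F L] (V i))
    (hV : ∀ i, ∀ᵐ ω ∂P, V i ω ∈ Set.Icc ε 1)
    (r : Fin (n + 1) → ℝ) (hr : ∀ i, 0 < r i)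
    (alloc : ℕ → Fin (n + 1) → Ω → ℤ)
    (hAlloc : ∀ m (ω : Ω) (i : Fin (n + 1)), (i : ℕ) < n →
      alloc m i ω = max (Nat.sqrt m : ℤ)
        ⌊(m : ℝ) * Real.sqrt ((P[V i | F (Nat.sqrt m)]) ω) /
          ∑ j, Real.sqrt ((P[V j | F (Nat.sqrt m)]) ω)⌋)
    (hAllocLast : ∀ m (ω : Ω),
      alloc m (Fin.last n) ω =
        (m : ℤ) - ∑ i ∈ Finset.univ.filter (fun i : Fin (n + 1) => (i : ℕ) < n),
          alloc m i ω) :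
    ∀ i j : Fin (n + 1), i ≠ j →
      Tendsto (fun m : ℕ => ∫ ω,
          (((alloc m i ω : ℝ) + r i) * Real.sqrt ((P[V j | F m]) ω) -
            ((alloc m j ω : ℝ) + r j) * Real.sqrt ((P[V i | F m]) ω)) ^ 2 /
          (((alloc m i ω : ℝ) + r i) * ((alloc m j ω : ℝ) + r j)) ∂P)
        atTop (nhds 0) := by
  intro i j _
  have hgood : ∀ᵐ ω ∂P, (∀ k, V k ω ∈ Set.Icc ε 1) ∧ ∀ k, (∀ L, P[V k|F L] ω ∈ Set.Icc ε 1) ∧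
      Tendsto (fun L => P[V k|F L] ω) atTop (nhds (V k ω)) :=
    (ae_all_iff.2 hV).and (ae_all_iff.2 fun k => ae_condExp_mem_Icc_and_tendsto
      (ℱ := ⟨F, hFmono, hFle⟩) (hVmeas k).stronglyMeasurable (hV k))
  set w : Ω → ℕ → Fin (n + 1) → ℝ := fun ω L k => √(P[V k|F L] ω)
  have halloc : ∀ ω, IsTwoStageAllocation (w ω) (fun m k => alloc m k ω) := fun ω =>
    { castSucc := fun m k => by rw [hAlloc m ω _ (by simp), mul_div_assoc]; rfl
      last := fun m => by rw [hAllocLast]; simp [Finset.sum_filter, Fin.sum_univ_castSucc] }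
  set c := √ε / (n + 1) / 2
  have hc : 0 < c := by positivity
  refine tendsto_integral_crossTerm_zero (x := fun m ω => alloc m i ω + r i)
    (y := fun m ω => alloc m j ω + r j) (u := fun m ω => P[V i|F m] ω)
    (v := fun m ω => P[V j|F m] ω) (K := 1 + r i) (K' := 1 + r j) hc (fun m => ?_) ?_ ?_
  · have hW : ∀ L k, Measurable (P[V k|F L]) := fun L k =>
      (stronglyMeasurable_condExp.mono (hFle L)).measurable
    have hA := IsTwoStageAllocation.measurable halloc fun L k => (hW L k).sqrt
    exact Measurable.aestronglyMeasurable (by unfold crossTerm; fun_prop)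
  · filter_upwards [eventually_mul_sqrt_add_one_le_mul hc n, eventually_ge_atTop 1]
      with m hm hm₁
    filter_upwards [hgood] with ω ⟨_, hW⟩
    have hw : ∀ L k, w ω L k ∈ Set.Icc (√ε) 1 := fun L k =>
      ⟨Real.sqrt_le_sqrt ((hW k).1 L).1, Real.sqrt_le_one.2 ((hW k).1 L).2⟩
    exact ⟨(halloc ω).add_mem_Icc (Real.sqrt_pos.2 hε) hw hm₁ hm (hr i).le i,
      (halloc ω).add_mem_Icc (Real.sqrt_pos.2 hε) hw hm₁ hm (hr j).le j,
      ((hW i).1 m).2, ((hW j).1 m).2⟩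
  · filter_upwards [hgood] with ω ⟨hVω, hW⟩
    have hVpos : ∀ k, 0 < √(V k ω) := fun k => Real.sqrt_pos.2 (hε.trans_le (hVω k).1)
    have hσ := (halloc ω).tendsto_div hVpos fun k => (hW k).2.sqrt
    exact tendsto_crossTerm_zero (share_pos hVpos i).ne' (share_pos hVpos j).ne'
      (tendsto_add_const_div_natCast (hσ i) _) (tendsto_add_const_div_natCast (hσ j) _)
      (hW i).2 (hW j).2 (by simp only [share]; ring)
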